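/- Let n ≥ 1, let V : ℝ × ℝⁿ → ℝⁿ and u : ℝ × ℝⁿ → ℝ be C¹, and suppose u satisfies the continuity equation ∂t u(t,x) + div_x(u · V)(t,x) = 0 for all (t,x). Then for every C¹ function F : ℝ → ℝ and every point (t,x): ∂t(F(u))(t,x) + div_x((F ∘ u) · V)(t,x) = ( F(u(t,x)) − u(t,x) · F′(u(t,x)) ) · div_x V(t,x). -/

import Mathlib

/-!
By the Leibniz rule `div (f V) = ∇f · V + f div V` and the chain rule, the left-hand side is
`F'(u) (∂t u + ∇u · V) + F(u) div V`, while the continuity equation says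
`∂t u + ∇u · V = -u div V`.
-/

/-- Spatial divergence of a time-dependent vector field on `ℝ × ℝⁿ`:
`∑ i, ∂W_i/∂x_i`. -/
noncomputable def spaceDiv {n : ℕ}
    (W : ℝ × EuclideanSpace ℝ (Fin n) → EuclideanSpace ℝ (Fin n))
    (t : ℝ) (x : EuclideanSpace ℝ (Fin n)) : ℝ :=
  ∑ i, fderiv ℝ (fun y => W (t, y) i) x (EuclideanSpace.single i 1)

theorem ContinuousLinearMap.euclideanSpace_apply_eq_sum {ι : Type*} [Fintype ι] [DecidableEq ι]
    {M : Type*} [AddCommMonoid M] [Module ℝ M] [TopologicalSpace M]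
    (L : EuclideanSpace ℝ ι →L[ℝ] M) (v : EuclideanSpace ℝ ι) :
    L v = ∑ i, v i • L (EuclideanSpace.single i 1) := by
  conv_lhs => rw [← (EuclideanSpace.basisFun ι ℝ).sum_repr v]
  simp only [EuclideanSpace.basisFun_repr, EuclideanSpace.basisFun_apply, map_sum, map_smul]

theorem fderiv_scalar_comp_apply {E : Type*} [NormedAddCommGroup E] [NormedSpace ℝ E]
    {F : ℝ → ℝ} {g : E → ℝ} {x : E}
    (hF : DifferentiableAt ℝ F (g x)) (hg : DifferentiableAt ℝ g x) (v : E) :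
    fderiv ℝ (fun y => F (g y)) x v = deriv F (g x) * fderiv ℝ g x v := by
  change fderiv ℝ (F ∘ g) x v = _
  rw [(hF.hasDerivAt.comp_hasFDerivAt x hg.hasFDerivAt).fderiv]
  simp only [smul_apply, smul_eq_mul]

theorem spaceDiv_smul {n : ℕ} {t : ℝ} {x : EuclideanSpace ℝ (Fin n)}
    {f : ℝ × EuclideanSpace ℝ (Fin n) → ℝ}
    {W : ℝ × EuclideanSpace ℝ (Fin n) → EuclideanSpace ℝ (Fin n)}
    (hf : DifferentiableAt ℝ (fun y => f (t, y)) x)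
    (hW : DifferentiableAt ℝ (fun y => W (t, y)) x) :
    spaceDiv (fun p => f p • W p) t x
      = fderiv ℝ (fun y => f (t, y)) x (W (t, x)) + f (t, x) * spaceDiv W t x := by
  have hW_coord (i : Fin n) : DifferentiableAt ℝ (fun y => W (t, y) i) x :=
    (EuclideanSpace.proj (𝕜 := ℝ) i).differentiableAt.comp x hW
  rw [ContinuousLinearMap.euclideanSpace_apply_eq_sum, spaceDiv, spaceDiv, Finset.mul_sum,
    ← Finset.sum_add_distrib]
  refine Finset.sum_congr rfl fun i _ => ?_
  simp only [PiLp.smul_apply, smul_eq_mul, fderiv_fun_mul hf (hW_coord i),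
    add_apply, smul_apply]
  ring

theorem stmt2_general {n : ℕ}
    (V : ℝ × EuclideanSpace ℝ (Fin n) → EuclideanSpace ℝ (Fin n))
    (hV : ContDiff ℝ 1 V)
    (u : ℝ × EuclideanSpace ℝ (Fin n) → ℝ) (hu : ContDiff ℝ 1 u)
    (hcont : ∀ t x, deriv (fun s => u (s, x)) t
      + spaceDiv (fun p => u p • V p) t x = 0)
    (F : ℝ → ℝ) (hF : ContDiff ℝ 1 F) :
    ∀ t x, deriv (fun s => F (u (s, x))) t
        + spaceDiv (fun p => F (u p) • V p) t x
      = (F (u (t, x)) - u (t, x) * deriv F (u (t, x))) * spaceDiv V t x := by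
  intro t x
  have hF_diff := hF.differentiable one_ne_zero
  have hu_time : Differentiable ℝ fun s => u (s, x) :=
    (hu.differentiable one_ne_zero).comp (by fun_prop)
  have hu_space : Differentiable ℝ fun y => u (t, y) :=
    (hu.differentiable one_ne_zero).comp (by fun_prop)
  have hV_space : Differentiable ℝ fun y => V (t, y) :=
    (hV.differentiable one_ne_zero).comp (by fun_prop)
  have hcont_tx := hcont t x
  rw [spaceDiv_smul (hu_space x) (hV_space x)] at hcont_tx
  have htime : deriv (fun s => F (u (s, x))) t
      = deriv F (u (t, x)) * deriv (fun s => u (s, x)) t :=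
    deriv_comp t (hF_diff _) (hu_time t)
  rw [htime, spaceDiv_smul ((hF_diff _).comp x (hu_space x)) (hV_space x),
    fderiv_scalar_comp_apply (hF_diff _) (hu_space x)]
  linear_combination deriv F (u (t, x)) * hcont_tx

/-- The defect identity for composite scalar fields: if `u` satisfies the
continuity equation `∂t u + div(u V) = 0`, then for every `C¹` function `F`,
`∂t(F(u)) + div((F ∘ u) V) = (F(u) - u F'(u)) · div V` pointwise. -/
theorem stmt2 {n : ℕ} (hn : 1 ≤ n)
    (V : ℝ × EuclideanSpace ℝ (Fin n) → EuclideanSpace ℝ (Fin n))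
    (hV : ContDiff ℝ 1 V)
    (u : ℝ × EuclideanSpace ℝ (Fin n) → ℝ) (hu : ContDiff ℝ 1 u)
    (hcont : ∀ t x, deriv (fun s => u (s, x)) t
      + spaceDiv (fun p => u p • V p) t x = 0)
    (F : ℝ → ℝ) (hF : ContDiff ℝ 1 F) :
    ∀ t x, deriv (fun s => F (u (s, x))) t
        + spaceDiv (fun p => F (u p) • V p) t x
      = (F (u (t, x)) - u (t, x) * deriv F (u (t, x))) * spaceDiv V t x :=
  stmt2_general V hV u hu hcont F hF
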